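/- Let X be a completely regular Hausdorff (Tychonoff) space and let H be a non-vanishing closed ideal of C_B(X). For a closed subideal M of H, the following are equivalent: (1) M is a maximal closed subideal of H (i.e., M is a proper closed subideal of H and is maximal among proper closed subideals of H); (2) there is a point x in λ_H X such that λ_M X = λ_H X \ {x}. -/

import Mathlib

/-!
Extension to `βX` is a ring isomorphism `C_B(X) ≃ C(βX)`, continuous in both directions, so by
the description of the closed ideals of `C(K)` for compact Hausdorff `K`
(`ContinuousMap.idealOfSet_ofIdeal_isClosed`), `G ↦ λ_G X` is an order isomorphism from the closed
ideals of `C_B(X)` onto the open subsets of `βX`. Maximal closed subideals of `H` are the closed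
ideals covered by `H`, and among the open subsets of a T₁ space, `U` is covered by `V` exactly
when `U = V \ {x}` for some `x ∈ V`.
-/

open BoundedContinuousFunction Set Filter Topology

section Preamble

variable {X : Type*} [TopologicalSpace X] {𝕜 : Type*} [RCLike 𝕜]

theorem betaExt_aux (f : X →ᵇ 𝕜) :
    Continuous (fun x => (⟨f x, by
      simpa [Metric.mem_closedBall, dist_zero_right] using f.norm_coe_le_norm x⟩ :
        Metric.closedBall (0 : 𝕜) ‖f‖)) :=
  f.continuous.subtype_mk _

/-- `f_β`, the unique continuous extension of a bounded continuous function `f : X → 𝕜` to the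
Stone–Čech compactification `βX`. -/
noncomputable def betaExt (f : X →ᵇ 𝕜) : StoneCech X → 𝕜 :=
  haveI : CompactSpace (Metric.closedBall (0 : 𝕜) ‖f‖) :=
    isCompact_iff_compactSpace.mp (isCompact_closedBall 0 ‖f‖)
  fun p => (stoneCechExtend (betaExt_aux f) p).1

theorem betaExt_unit (f : X →ᵇ 𝕜) (x : X) : betaExt f (stoneCechUnit x) = f x := by
  haveI : CompactSpace (Metric.closedBall (0 : 𝕜) ‖f‖) :=
    isCompact_iff_compactSpace.mp (isCompact_closedBall 0 ‖f‖)
  exact congrArg Subtype.val (congrFun (stoneCechExtend_extends (betaExt_aux f)) x)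

theorem continuous_betaExt (f : X →ᵇ 𝕜) : Continuous (betaExt f) := by
  haveI : CompactSpace (Metric.closedBall (0 : 𝕜) ‖f‖) :=
    isCompact_iff_compactSpace.mp (isCompact_closedBall 0 ‖f‖)
  exact continuous_subtype_val.comp (continuous_stoneCechExtend _)

/-- `λ_G X`, the union over `g ∈ G` of the cozero-sets in `βX` of the extensions `g_β`. -/
def lambdaSet (G : Ideal (X →ᵇ 𝕜)) : Set (StoneCech X) :=
  ⋃ g ∈ G, {p | betaExt g p ≠ 0}

end Preamble

open TopologicalSpace

abbrev ClosedIdeal (R : Type*) [CommSemiring R] [TopologicalSpace R] :=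
  {I : Ideal R // IsClosed (I : Set R)}

theorem Subtype.mk_covBy_mk_iff {α : Type*} [PartialOrder α] {P : α → Prop} {a b : α}
    (ha : P a) (hb : P b) (hab : a ≤ b) :
    (⟨a, ha⟩ : Subtype P) ⋖ ⟨b, hb⟩ ↔ a ≠ b ∧ ∀ c, P c → c ≤ b → c ≠ b → a ≤ c → c = a := by
  rw [covBy_iff_lt_and_eq_or_eq, Subtype.forall]
  simp only [Subtype.mk_lt_mk, Subtype.mk_le_mk, Subtype.mk.injEq, hab.lt_iff_ne]
  exact and_congr_right fun _ => forall_congr' fun c => forall_congr' fun _ => by tauto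

theorem TopologicalSpace.Opens.covBy_iff_exists_sdiff_singleton {K : Type*} [TopologicalSpace K]
    [T1Space K] {U V : Opens K} : U ⋖ V ↔ ∃ x ∈ V, (V : Set K) \ {x} = U := by
  constructor
  · intro h
    obtain ⟨x, hxV, hxU⟩ := SetLike.exists_of_lt h.lt
    let W : Opens K := ⟨V \ {x}, V.isOpen.sdiff isClosed_singleton⟩
    have hUW : U ≤ W := fun y hy => ⟨h.le hy, by rintro rfl; exact hxU hy⟩
    have hWV : W < V := SetLike.lt_iff_le_and_exists.2 ⟨sdiff_subset, x, hxV, fun h => h.2 rfl⟩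
    have hUeqW : U = W := hUW.lt_or_eq.resolve_left fun hlt => h.2 hlt hWV
    exact ⟨x, hxV, congrArg ((↑) : Opens K → Set K) hUeqW.symm⟩
  · rintro ⟨x, hx, hU⟩
    have hset : (U : Set K) ⋖ V := hU ▸ Set.sdiff_singleton_covBy hx
    exact ⟨SetLike.coe_ssubset_coe.mp hset.lt, fun W h₁ h₂ => hset.2 h₁ h₂⟩

def RingEquiv.closedIdealOrderIso {R S : Type*} [CommSemiring R] [TopologicalSpace R]
    [CommSemiring S] [TopologicalSpace S] (e : R ≃+* S) (he : Continuous e)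
    (he' : Continuous e.symm) : ClosedIdeal R ≃o ClosedIdeal S :=
  Equiv.toOrderIso
    { toFun I := ⟨I.1.comap e.symm, I.2.preimage he'⟩
      invFun J := ⟨J.1.comap e, J.2.preimage he⟩
      left_inv I := Subtype.ext (by ext; simp only [Ideal.mem_comap, RingEquiv.symm_apply_apply])
      right_inv J := Subtype.ext (by ext; simp only [Ideal.mem_comap, RingEquiv.apply_symm_apply]) }
    (fun _ _ h => Ideal.comap_mono h) (fun _ _ h => Ideal.comap_mono h)

namespace ContinuousMap

variable {K 𝕜 : Type*} [TopologicalSpace K] [CompactSpace K] [T2Space K] [RCLike 𝕜]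

def closedIdealOrderIsoOpens : ClosedIdeal C(K, 𝕜) ≃o Opens K :=
  Equiv.toOrderIso
    { toFun I := opensOfIdeal I.1
      invFun U := ⟨idealOfSet 𝕜 U, idealOfSet_closed 𝕜 (U : Set K)⟩
      left_inv I := Subtype.ext (idealOfSet_ofIdeal_isClosed I.2)
      right_inv U := Opens.ext (setOfIdeal_ofSet_of_isOpen 𝕜 U.isOpen) }
    (fun _ _ h => (ideal_gc K 𝕜).monotone_l h) (fun _ _ h => (ideal_gc K 𝕜).monotone_u h)

end ContinuousMap

section StoneCech

variable {X : Type*} [TopologicalSpace X] {𝕜 : Type*} [RCLike 𝕜]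

theorem betaExt_eq_of_comp_stoneCechUnit {f : X →ᵇ 𝕜} {g : StoneCech X → 𝕜} (hg : Continuous g)
    (h : ∀ x, g (stoneCechUnit x) = f x) : betaExt f = g :=
  Continuous.ext_on denseRange_stoneCechUnit (continuous_betaExt f) hg <| by
    rintro _ ⟨x, rfl⟩
    rw [betaExt_unit, h]

theorem norm_betaExt_le (f : X →ᵇ 𝕜) (p : StoneCech X) : ‖betaExt f p‖ ≤ ‖f‖ :=
  haveI : CompactSpace (Metric.closedBall (0 : 𝕜) ‖f‖) :=
    isCompact_iff_compactSpace.mp (isCompact_closedBall 0 ‖f‖)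
  mem_closedBall_zero_iff.mp (stoneCechExtend (betaExt_aux f) p).2

variable (X 𝕜) in
noncomputable def betaExtRingEquiv : (X →ᵇ 𝕜) ≃+* C(StoneCech X, 𝕜) where
  toFun f := ⟨betaExt f, continuous_betaExt f⟩
  invFun g := (mkOfCompact g).compContinuous ⟨stoneCechUnit, continuous_stoneCechUnit⟩
  left_inv f := by ext x; exact betaExt_unit f x
  right_inv g := ContinuousMap.ext <| congrFun <|
    betaExt_eq_of_comp_stoneCechUnit g.continuous fun _ => rfl
  map_mul' f g := ContinuousMap.ext <| congrFun <| betaExt_eq_of_comp_stoneCechUnit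
    ((continuous_betaExt f).mul (continuous_betaExt g)) fun x => by simp [betaExt_unit]
  map_add' f g := ContinuousMap.ext <| congrFun <| betaExt_eq_of_comp_stoneCechUnit
    ((continuous_betaExt f).add (continuous_betaExt g)) fun x => by simp [betaExt_unit]

@[simp]
theorem coe_betaExtRingEquiv (f : X →ᵇ 𝕜) : ⇑(betaExtRingEquiv X 𝕜 f) = betaExt f := rfl

theorem continuous_betaExtRingEquiv : Continuous (betaExtRingEquiv X 𝕜) :=
  AddMonoidHomClass.continuous_of_bound (betaExtRingEquiv X 𝕜) 1 fun f => by
    rw [one_mul]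
    exact (ContinuousMap.norm_le _ (norm_nonneg f)).2 (norm_betaExt_le f)

theorem continuous_betaExtRingEquiv_symm : Continuous (betaExtRingEquiv X 𝕜).symm :=
  AddMonoidHomClass.continuous_of_bound (betaExtRingEquiv X 𝕜).symm 1 fun g => by
    rw [one_mul]
    exact (norm_le (norm_nonneg g)).2 fun x => g.norm_coe_le_norm _

theorem lambdaSet_eq_setOfIdeal (G : Ideal (X →ᵇ 𝕜)) :
    lambdaSet G = ContinuousMap.setOfIdeal (G.comap (betaExtRingEquiv X 𝕜).symm) := by
  ext p
  simp only [lambdaSet, mem_iUnion, ContinuousMap.mem_setOfIdeal, Ideal.mem_comap,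
    (betaExtRingEquiv X 𝕜).surjective.exists, RingEquiv.symm_apply_apply, coe_betaExtRingEquiv,
    exists_prop, mem_ofPred_eq]

noncomputable def closedIdealOrderIsoOpensStoneCech :
    ClosedIdeal (X →ᵇ 𝕜) ≃o Opens (StoneCech X) :=
  ((betaExtRingEquiv X 𝕜).closedIdealOrderIso continuous_betaExtRingEquiv
    continuous_betaExtRingEquiv_symm).trans ContinuousMap.closedIdealOrderIsoOpens

theorem coe_closedIdealOrderIsoOpensStoneCech (G : ClosedIdeal (X →ᵇ 𝕜)) :
    (closedIdealOrderIsoOpensStoneCech G : Set (StoneCech X)) = lambdaSet G.1 :=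
  (lambdaSet_eq_setOfIdeal G.1).symm

end StoneCech

theorem maximal_closed_subideal_iff_general {X : Type*} [TopologicalSpace X]
    {𝕜 : Type*} [RCLike 𝕜] (H M : Ideal (X →ᵇ 𝕜))
    (hcl : IsClosed (H : Set (X →ᵇ 𝕜)))
    (hMc : IsClosed (M : Set (X →ᵇ 𝕜))) (hMH : M ≤ H) :
    (M ≠ H ∧ ∀ N : Ideal (X →ᵇ 𝕜),
        IsClosed (N : Set (X →ᵇ 𝕜)) → N ≤ H → N ≠ H → M ≤ N → N = M) ↔
      ∃ x ∈ lambdaSet H, lambdaSet M = lambdaSet H \ {x} := by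
  rw [← Subtype.mk_covBy_mk_iff (P := fun I : Ideal (X →ᵇ 𝕜) => IsClosed (I : Set (X →ᵇ 𝕜)))
      hMc hcl hMH,
    ← apply_covBy_apply_iff closedIdealOrderIsoOpensStoneCech,
    Opens.covBy_iff_exists_sdiff_singleton]
  simp only [← SetLike.mem_coe, coe_closedIdealOrderIsoOpensStoneCech, eq_comm]

/-- For a Tychonoff space `X`, a non-vanishing closed ideal `H` of `C_B(X)` and a closed
subideal `M` of `H`: `M` is a maximal closed subideal of `H` (proper, and maximal among proper
closed subideals of `H`) iff `λ_M X = λ_H X \ {x}` for some `x ∈ λ_H X`. -/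
theorem maximal_closed_subideal_iff {X : Type*} [TopologicalSpace X] [T35Space X]
    {𝕜 : Type*} [RCLike 𝕜] (H M : Ideal (X →ᵇ 𝕜))
    (hcl : IsClosed (H : Set (X →ᵇ 𝕜))) (hnv : ∀ x : X, ∃ h ∈ H, h x ≠ 0)
    (hMc : IsClosed (M : Set (X →ᵇ 𝕜))) (hMH : M ≤ H) :
    (M ≠ H ∧ ∀ N : Ideal (X →ᵇ 𝕜),
        IsClosed (N : Set (X →ᵇ 𝕜)) → N ≤ H → N ≠ H → M ≤ N → N = M) ↔
      ∃ x ∈ lambdaSet H, lambdaSet M = lambdaSet H \ {x} :=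
  maximal_closed_subideal_iff_general H M hcl hMc hMH
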